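/- There exists a homeomorphism φ of the Cantor space {0,1}^ℕ = (ℕ → Bool) (with the product topology) which has a fixed point, whose set of periodic points is dense, and such that ({0,1}^ℕ, φ) is totally transitive. -/

import Mathlib

/-!
The two-sided full shift on `ℤ → Bool`, transported to `ℕ → Bool` along a bijection `ℕ ≃ ℤ`,
does the job. Constant sequences are fixed, and periodic sequences match any finite pattern.
Every power `shift^k` is topologically transitive: far enough along the orbit, a finite pattern
prescribed at a later time no longer overlaps the one prescribed at time zero. Birkhoff's
transitivity argument (Baire category in the compact metrizable space `ℤ → Bool`) then gives a
single point whose orbit under every `shift^k` is dense.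
-/

open Set Function

section Birkhoff

variable {X ι : Type*} [TopologicalSpace X]

theorem exists_forall_dense_range_iterate [BaireSpace X] [SecondCountableTopology X]
    [Nonempty X] [Countable ι] (f : ι → X → X) (hf : ∀ i, Continuous (f i))
    (htrans : ∀ i {U V : Set X}, IsOpen U → U.Nonempty → IsOpen V → V.Nonempty →
      ∃ n : ℕ, (U ∩ (f i)^[n + 1] ⁻¹' V).Nonempty) :
    ∃ w : X, ∀ i, Dense (range fun n : ℕ => (f i)^[n + 1] w) := by
  obtain ⟨B, hBc, hBne, hB⟩ := TopologicalSpace.exists_countable_basis X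
  have : Countable B := hBc.to_subtype
  let visits (p : ι × B) : Set X := ⋃ n : ℕ, (f p.1)^[n + 1] ⁻¹' p.2
  have hopen (p : ι × B) : IsOpen (visits p) :=
    isOpen_iUnion fun n => (hB.isOpen p.2.2).preimage ((hf p.1).iterate _)
  have hdense (p : ι × B) : Dense (visits p) := by
    refine dense_iff_inter_open.2 fun U hU hUne => ?_
    obtain ⟨n, x, hxU, hxV⟩ := htrans p.1 hU hUne (hB.isOpen p.2.2)
      (nonempty_iff_ne_empty.2 fun h => hBne (h ▸ p.2.2))
    exact ⟨x, hxU, mem_iUnion.2 ⟨n, hxV⟩⟩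
  obtain ⟨w, hw⟩ := (dense_iInter_of_isOpen hopen hdense).nonempty
  refine ⟨w, fun i => hB.dense_iff.2 fun V hV _ => ?_⟩
  obtain ⟨n, hn⟩ := mem_iUnion.1 (mem_iInter.1 hw (i, ⟨V, hV⟩))
  exact ⟨_, hn, n, rfl⟩

end Birkhoff

section Cylinder

variable {ι α : Type*} [TopologicalSpace α]

theorem IsOpen.exists_finset_eqOn_subset {U : Set (ι → α)} (hU : IsOpen U) {f : ι → α}
    (hf : f ∈ U) : ∃ F : Finset ι, {g | EqOn g f F} ⊆ U := by
  obtain ⟨F, u, hu, hFu⟩ := isOpen_pi_iff.1 hU f hf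
  exact ⟨F, fun g hg => hFu fun i hi => (hg hi).symm ▸ (hu i hi).2⟩

theorem dense_of_forall_exists_eqOn {s : Set (ι → α)}
    (h : ∀ (f : ι → α) (F : Finset ι), ∃ g ∈ s, EqOn g f F) : Dense s := by
  refine dense_iff_inter_open.2 fun U hU ⟨f, hf⟩ => ?_
  obtain ⟨F, hF⟩ := hU.exists_finset_eqOn_subset hf
  obtain ⟨g, hgs, hg⟩ := h f F
  exact ⟨g, hF hg, hgs⟩

end Cylinder

section TwoSidedShift

variable {α : Type*} [TopologicalSpace α]

def twoSidedShift : (ℤ → α) ≃ₜ (ℤ → α) where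
  toFun f n := f (n + 1)
  invFun f n := f (n - 1)
  left_inv f := by funext n; simp
  right_inv f := by funext n; simp
  continuous_toFun := continuous_pi fun n => continuous_apply (n + 1)
  continuous_invFun := continuous_pi fun n => continuous_apply (n - 1)

@[simp]
theorem twoSidedShift_apply (f : ℤ → α) (n : ℤ) : twoSidedShift f n = f (n + 1) := rfl

theorem twoSidedShift_iterate_apply (m : ℕ) (f : ℤ → α) (n : ℤ) :
    (⇑twoSidedShift)^[m] f n = f (n + m) := by
  induction m generalizing n with
  | zero => simp
  | succ m ih =>
    rw [iterate_succ_apply', twoSidedShift_apply, ih]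
    push_cast
    ring_nf

theorem dense_periodicPts_twoSidedShift : Dense (periodicPts (twoSidedShift (α := α))) := by
  refine dense_of_forall_exists_eqOn fun f F => ?_
  set N : ℕ := F.sup Int.natAbs + 1
  -- `g` repeats the values of `f` on the window `[-N, N)` with period `2N`.
  refine ⟨fun i => f ((i + N) % (2 * N) - N), ⟨2 * N, by omega, ?_⟩, fun i hi => ?_⟩
  · funext n
    rw [twoSidedShift_iterate_apply]
    push_cast
    rw [show n + 2 * N + N = n + N + 2 * N by ring, Int.add_emod_right]
  · have := Finset.le_sup (f := Int.natAbs) hi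
    show f ((i + N) % (2 * N) - N) = f i
    rw [Int.emod_eq_of_lt (by omega) (by omega), add_sub_cancel_right]

theorem exists_inter_twoSidedShift_iterate_preimage_nonempty {k : ℕ} (hk : 0 < k)
    {U V : Set (ℤ → α)} (hU : IsOpen U) (hUne : U.Nonempty) (hV : IsOpen V) (hVne : V.Nonempty) :
    ∃ n : ℕ, (U ∩ ((⇑twoSidedShift)^[k])^[n + 1] ⁻¹' V).Nonempty := by
  obtain ⟨u, hu⟩ := hUne
  obtain ⟨v, hv⟩ := hVne
  obtain ⟨F, hF⟩ := hU.exists_finset_eqOn_subset hu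
  obtain ⟨G, hG⟩ := hV.exists_finset_eqOn_subset hv
  set n := F.sup Int.natAbs + G.sup Int.natAbs
  -- `n` is so large that `G` translated by `k * (n + 1)` is disjoint from `F`.
  refine ⟨n, fun i => if i ∈ F then u i else v (i - k * (n + 1)), hF fun i hi => if_pos hi,
    hG fun i hi => ?_⟩
  have hn : (n : ℤ) + 1 ≤ k * (n + 1) :=
    le_mul_of_one_le_left (by positivity) (by exact_mod_cast hk)
  have hiF : i + k * (n + 1) ∉ F := fun h => by
    have := Finset.le_sup (f := Int.natAbs) h
    have := Finset.le_sup (f := Int.natAbs) hi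
    omega
  rw [← iterate_mul, twoSidedShift_iterate_apply]
  push_cast
  rw [if_neg hiF, add_sub_cancel_right]

end TwoSidedShift

theorem Homeomorph.iterate_trans_trans_symm {X Y : Type*} [TopologicalSpace X]
    [TopologicalSpace Y] (e : X ≃ₜ Y) (ψ : Y ≃ₜ Y) (m : ℕ) :
    (⇑(e.trans (ψ.trans e.symm)))^[m] = e.symm ∘ (⇑ψ)^[m] ∘ e := by
  have h : Semiconj e (e.trans (ψ.trans e.symm)) ψ := fun x => by simp
  funext x
  simp [← (h.iterate_right m).eq x]

/-- The Cantor space `{0,1}^ℕ` admits a totally transitive homeomorphism with a fixed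
point and a dense set of periodic points. -/
theorem stmt16 :
    ∃ φ : (ℕ → Bool) ≃ₜ (ℕ → Bool), (∃ x, φ x = x) ∧
      Dense {x : ℕ → Bool | ∃ m : ℕ, 0 < m ∧ (⇑φ)^[m] x = x} ∧
      ∃ w : ℕ → Bool, ∀ k : ℕ, 0 < k →
        Dense (Set.range fun n : ℕ => (⇑φ)^[k * (n + 1)] w) := by
  let E : (ℕ → Bool) ≃ₜ (ℤ → Bool) :=
    Homeomorph.piCongrLeft (Y := fun _ => Bool) (Denumerable.eqv ℤ).symm
  obtain ⟨w, hw⟩ := exists_forall_dense_range_iterate (ι := {k : ℕ // 0 < k})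
    (fun k => (⇑(twoSidedShift (α := Bool)))^[k]) (fun k => twoSidedShift.continuous.iterate k)
    (fun k => exists_inter_twoSidedShift_iterate_preimage_nonempty k.2)
  have hiter := E.iterate_trans_trans_symm twoSidedShift
  refine ⟨E.trans (twoSidedShift.trans E.symm), ⟨E.symm fun _ => false, ?_⟩, ?_, E.symm w,
    fun k hk => ?_⟩
  · simp [funext_iff]
  · have : {x | ∃ m, 0 < m ∧ (⇑(E.trans (twoSidedShift.trans E.symm)))^[m] x = x}
        = E ⁻¹' periodicPts twoSidedShift := by
      ext x
      simp [hiter, E.symm_apply_eq, periodicPts, IsPeriodicPt, IsFixedPt]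
    exact this ▸ dense_periodicPts_twoSidedShift.preimage E.isOpenMap
  · simp only [hiter, comp_apply, E.apply_symm_apply, iterate_mul]
    rw [range_comp', E.image_symm]
    exact (hw ⟨k, hk⟩).preimage E.isOpenMap
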